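/- Let A be an algebra and let {0', β, δ, θ, α} be a pentagon sublattice of Con(A) (with δ < θ, β ∧ θ = β ∧ δ = 0', β ∨ δ = β ∨ θ = α). Then C(β,θ;δ) holds if and only if C(α,θ;δ) holds. -/

import Mathlib

/-- A (universal-algebraic) signature: a type of operation symbols with arities. -/
structure Sig where
  ops : Type
  arity : ops → ℕ

/-- An algebra for a signature: a carrier set with an interpretation of each
operation symbol. -/
structure Alg (σ : Sig) where
  carrier : Type
  interp : ∀ f : σ.ops, (Fin (σ.arity f) → carrier) → carrier

/-- Terms over a signature with variables from `V`. -/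
inductive Trm (σ : Sig) (V : Type) : Type
  | var : V → Trm σ V
  | op : (f : σ.ops) → (Fin (σ.arity f) → Trm σ V) → Trm σ V

/-- Evaluation of a term in an algebra under an assignment of the variables. -/
def Alg.evalTrm {σ : Sig} (A : Alg σ) {V : Type} (asg : V → A.carrier) :
    Trm σ V → A.carrier
  | .var v => asg v
  | .op f ts => A.interp f fun i => A.evalTrm asg (ts i)

/-- A congruence on an algebra: an equivalence relation compatible with the
basic operations. -/
structure Congruence {σ : Sig} (A : Alg σ) where
  rel : A.carrier → A.carrier → Prop
  iseqv : Equivalence rel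
  compat : ∀ (f : σ.ops) (a b : Fin (σ.arity f) → A.carrier),
    (∀ i, rel (a i) (b i)) → rel (A.interp f a) (A.interp f b)

namespace Congruence

variable {σ : Sig} {A : Alg σ}

theorem ext' {c d : Congruence A} (h : c.rel = d.rel) : c = d := by
  cases c; cases d; cases h; rfl

instance : PartialOrder (Congruence A) where
  le c d := ∀ a b, c.rel a b → d.rel a b
  le_refl c a b h := h
  le_trans c d e h1 h2 a b h := h2 a b (h1 a b h)
  le_antisymm c d h1 h2 :=
    ext' (funext fun a => funext fun b => propext ⟨h1 a b, h2 a b⟩)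

instance : InfSet (Congruence A) where
  sInf S :=
    { rel := fun a b => ∀ c ∈ S, c.rel a b
      iseqv := ⟨fun a c _ => c.iseqv.refl a,
                fun h c hc => c.iseqv.symm (h c hc),
                fun h1 h2 c hc => c.iseqv.trans (h1 c hc) (h2 c hc)⟩
      compat := fun f a b h c hc => c.compat f a b fun i => h i c hc }

/-- The congruences of an algebra form a complete lattice (`⊥` is the equality
congruence, `⊤` is the total congruence, meet is intersection). -/
instance : CompleteLattice (Congruence A) :=
  completeLatticeOfInf _ fun S =>
    ⟨fun c hc a b h => h c hc, fun c hc a b h d hd => hc hd a b h⟩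

end Congruence

/-- `Centralizes S T δ` is the centralizer relation `C(S,T;δ)`: for every
`S,T`-matrix `[[p,q],[r,s]]` (built from a term operation `t`, tuples `a S b`
and `u T v`), if `(p,q) ∈ δ` then `(r,s) ∈ δ`. -/
def Centralizes {σ : Sig} {A : Alg σ} (S T δ : Congruence A) : Prop :=
  ∀ (m n : ℕ) (t : Trm σ (Sum (Fin m) (Fin n)))
    (a b : Fin m → A.carrier) (u v : Fin n → A.carrier),
    (∀ i, S.rel (a i) (b i)) → (∀ j, T.rel (u j) (v j)) →
    δ.rel (A.evalTrm (Sum.elim a u) t) (A.evalTrm (Sum.elim a v) t) →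
    δ.rel (A.evalTrm (Sum.elim b u) t) (A.evalTrm (Sum.elim b v) t)

/-- The commC `[S,T]`: the least congruence `δ` with `C(S,T;δ)`. -/
def commC {σ : Sig} {A : Alg σ} (S T : Congruence A) : Congruence A :=
  sInf {δ | Centralizes S T δ}

/-- The relative commC `[S,T]_ε`: the intersection of all congruences
`γ ≥ ε` with `C(S,T;γ)`. -/
def relCommC {σ : Sig} {A : Alg σ} (S T ε : Congruence A) : Congruence A :=
  sInf {γ | ε ≤ γ ∧ Centralizes S T γ}

/-- The congruence generated by a single pair `(x, y)`. -/
def cgPair {σ : Sig} (A : Alg σ) (x y : A.carrier) : Congruence A :=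
  sInf {c | c.rel x y}

/-- Homomorphisms of algebras. -/
structure UAHom {σ : Sig} (A B : Alg σ) where
  toFun : A.carrier → B.carrier
  map_op : ∀ (f : σ.ops) (a : Fin (σ.arity f) → A.carrier),
    toFun (A.interp f a) = B.interp f (fun i => toFun (a i))

/-- The product of a family of algebras. -/
def prodAlg {σ : Sig} {I : Type} (F : I → Alg σ) : Alg σ where
  carrier := ∀ i, (F i).carrier
  interp f a := fun i => (F i).interp f (fun j => a j i)

/-- A variety: a class of algebras of a fixed signature closed under
homomorphic images, subalgebras (here: isomorphic copies of subalgebras,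
i.e. sources of injective homomorphisms), and arbitrary products. -/
structure Variety (σ : Sig) where
  Mem : Alg σ → Prop
  closed_hom : ∀ {A B : Alg σ}, Mem A →
    (∃ h : UAHom A B, Function.Surjective h.toFun) → Mem B
  closed_sub : ∀ {A B : Alg σ}, Mem A →
    (∃ h : UAHom B A, Function.Injective h.toFun) → Mem B
  closed_prod : ∀ {I : Type} (F : I → Alg σ), (∀ i, Mem (F i)) → Mem (prodAlg F)

/-- The setoid associated with a congruence. -/
def Congruence.setoid {σ : Sig} {A : Alg σ} (c : Congruence A) :
    Setoid A.carrier := ⟨c.rel, c.iseqv⟩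

/-- The quotient algebra of an algebra by a congruence. -/
noncomputable def quotAlg {σ : Sig} (A : Alg σ) (c : Congruence A) : Alg σ where
  carrier := Quotient c.setoid
  interp f a := Quotient.mk c.setoid (A.interp f fun i => (a i).out)

/-- `algOn A α` is the algebra `A(α)`: the subalgebra of `A × A` whose
universe is `α`. -/
def algOn {σ : Sig} (A : Alg σ) (α : Congruence A) : Alg σ where
  carrier := {p : A.carrier × A.carrier // α.rel p.1 p.2}
  interp f a := ⟨(A.interp f fun i => (a i).1.1, A.interp f fun i => (a i).1.2),
    α.compat f _ _ fun i => (a i).2⟩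

/-- The kernel of the first coordinate projection of `A(α)`. -/
def eta1 {σ : Sig} (A : Alg σ) (α : Congruence A) : Congruence (algOn A α) where
  rel p q := p.1.1 = q.1.1
  iseqv := ⟨fun _ => rfl, Eq.symm, Eq.trans⟩
  compat f a b h := congrArg (A.interp f) (funext h)

/-- The kernel of the second coordinate projection of `A(α)`. -/
def eta2 {σ : Sig} (A : Alg σ) (α : Congruence A) : Congruence (algOn A α) where
  rel p q := p.1.2 = q.1.2
  iseqv := ⟨fun _ => rfl, Eq.symm, Eq.trans⟩
  compat f a b h := congrArg (A.interp f) (funext h)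

/-- The congruence `Δ_{α,β}` on `A(α)` generated by the `β`-diagonal pairs. -/
def diagDelta {σ : Sig} (A : Alg σ) (α β : Congruence A) :
    Congruence (algOn A α) :=
  sInf {c | ∀ x z : A.carrier, β.rel x z →
    c.rel ⟨(x, x), α.iseqv.refl x⟩ ⟨(z, z), α.iseqv.refl z⟩}

/-- A pentagon (five-element sublattice isomorphic to `N₅`) in the congruence
lattice with bottom `z`, side element `β`, critical chain `δ < θ`, and top `α`. -/
def IsPentagon {σ : Sig} {A : Alg σ} (z β δ θ α : Congruence A) : Prop :=
  δ < θ ∧ β ⊓ θ = z ∧ β ⊓ δ = z ∧ β ⊔ δ = α ∧ β ⊔ θ = α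

/-- Two congruences permute: `c ∘ d = d ∘ c`. -/
def Permutes {σ : Sig} {A : Alg σ} (c d : Congruence A) : Prop :=
  ∀ a b : A.carrier, (∃ x, c.rel a x ∧ d.rel x b) ↔ (∃ x, d.rel a x ∧ c.rel x b)

/-- `T` is a Taylor term for the variety `V`: an idempotent term satisfying an
`i`-th place Taylor identity for every place `i`. -/
def IsTaylorTrm {σ : Sig} (V : Variety σ) {n : ℕ} (T : Trm σ (Fin n)) : Prop :=
  0 < n ∧
  (∀ A : Alg σ, V.Mem A → ∀ c : A.carrier, A.evalTrm (fun _ => c) T = c) ∧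
  (∀ i : Fin n, ∃ w z : Fin n → Bool, w i ≠ z i ∧
    ∀ A : Alg σ, V.Mem A → ∀ x y : A.carrier,
      A.evalTrm (fun j => cond (w j) x y) T = A.evalTrm (fun j => cond (z j) x y) T)

/-- `V` has a Taylor term. -/
def HasTaylorTrm {σ : Sig} (V : Variety σ) : Prop :=
  ∃ (n : ℕ) (T : Trm σ (Fin n)), IsTaylorTrm V T

/-- A congruence is abelian if `[α,α] = 0`. -/
def IsAbelianCong {σ : Sig} {A : Alg σ} (α : Congruence A) : Prop :=
  commC α α = ⊥

/-- `d` is a weak difference term for `V`: `d(a,a,b) = b` and `d(a,b,b) = a`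
whenever the pair `(a,b)` lies in an abelian congruence of a member of `V`. -/
def IsWeakDifferenceTrm {σ : Sig} (V : Variety σ) (d : Trm σ (Fin 3)) : Prop :=
  ∀ A : Alg σ, V.Mem A → ∀ α : Congruence A, IsAbelianCong α →
    ∀ a b : A.carrier, α.rel a b →
      A.evalTrm ![a, a, b] d = b ∧ A.evalTrm ![a, b, b] d = a

/-- `d` is a difference term for `V`: `V ⊨ d(x,x,y) ≈ y` and `d(a,b,b) = a`
whenever the pair `(a,b)` lies in an abelian congruence of a member of `V`. -/
def IsDifferenceTrm {σ : Sig} (V : Variety σ) (d : Trm σ (Fin 3)) : Prop :=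
  (∀ A : Alg σ, V.Mem A → ∀ a b : A.carrier, A.evalTrm ![a, a, b] d = b) ∧
  (∀ A : Alg σ, V.Mem A → ∀ α : Congruence A, IsAbelianCong α →
    ∀ a b : A.carrier, α.rel a b → A.evalTrm ![a, b, b] d = a)

/-- The commC is left distributive throughout `V`. -/
def CommLeftDistrib {σ : Sig} (V : Variety σ) : Prop :=
  ∀ A : Alg σ, V.Mem A → ∀ x y z : Congruence A,
    commC (x ⊔ y) z = commC x z ⊔ commC y z

/-- The commC is right distributive throughout `V`. -/
def CommRightDistrib {σ : Sig} (V : Variety σ) : Prop :=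
  ∀ A : Alg σ, V.Mem A → ∀ x y z : Congruence A,
    commC x (y ⊔ z) = commC x y ⊔ commC x z

/-- The commC is commutative throughout `V`. -/
def CommutativeCommutator {σ : Sig} (V : Variety σ) : Prop :=
  ∀ A : Alg σ, V.Mem A → ∀ x y : Congruence A, commC x y = commC y x

/-- `V` is congruence modular. -/
def CongruenceModular {σ : Sig} (V : Variety σ) : Prop :=
  ∀ A : Alg σ, V.Mem A → IsModularLattice (Congruence A)

/-!
Since `α = β ⊔ δ`, it suffices that `C(-,θ;δ)` is closed under joins and holds at `δ` itself.
The latter is immediate, because `δ`-related rows of a matrix stay `δ`-related. For the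
former, `β ⊔ δ` is the reflexive-transitive closure of `β ∪ δ`, so two `(β ⊔ δ)`-related
tuples are linked by a chain in which each step changes a single coordinate, hence is
uniformly a `β`-step or uniformly a `δ`-step, and the centrality condition is passed along
the chain.
-/

open Relation Function

section UpdateRel

variable {ι α : Type*} [DecidableEq ι]

def Function.updateRel (r : α → α → Prop) (x y : ι → α) : Prop :=
  ∃ i w, r (x i) w ∧ y = update x i w

theorem reflTransGen_updateRel_of_forall [Fintype ι] {r : α → α → Prop} {a b : ι → α}
    (h : ∀ i, ReflTransGen r (a i) (b i)) : ReflTransGen (updateRel r) a b := by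
  let mix (s : Finset ι) : ι → α := fun i => if i ∈ s then b i else a i
  have key (s : Finset ι) : ReflTransGen (updateRel r) a (mix s) := by
    induction s using Finset.induction_on with
    | empty => simpa [mix] using ReflTransGen.refl
    | insert j s hj ih =>
      have hmix_j : mix s j = a j := by simp [mix, hj]
      have hmix : mix (insert j s) = update (mix s) j (b j) := by
        ext i
        rcases eq_or_ne i j with rfl | hij
        · simp [mix]
        · simp [mix, hij]
      refine ih.trans ?_
      rw [hmix, ← update_eq_self j (mix s), hmix_j, update_idem]
      exact (h j).lift (update (mix s) j) fun x y hxy => ⟨j, y, by simpa using hxy, by simp⟩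
  simpa [mix] using key Finset.univ

end UpdateRel

namespace Congruence

variable {σ : Sig} {A : Alg σ}

theorem rel_evalTrm (c : Congruence A) {V : Type} {asg₁ asg₂ : V → A.carrier}
    (h : ∀ v, c.rel (asg₁ v) (asg₂ v)) (t : Trm σ V) :
    c.rel (A.evalTrm asg₁ t) (A.evalTrm asg₂ t) := by
  induction t with
  | var v => exact h v
  | op f ts ih => exact c.compat f _ _ ih

theorem rel_update {ι : Type*} [DecidableEq ι] (c : Congruence A) (x : ι → A.carrier) (i : ι)
    {w : A.carrier} (h : c.rel (x i) w) (j : ι) : c.rel (x j) (update x i w j) := by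
  rcases eq_or_ne j i with rfl | hj
  · simpa using h
  · rw [update_of_ne hj]
    exact c.iseqv.refl _

def joinChain (S S' : Congruence A) : Congruence A where
  rel := ReflTransGen fun x y => S.rel x y ∨ S'.rel x y
  iseqv :=
    ⟨fun _ => .refl,
     fun h => ReflTransGen.mono (fun _ _ hxy => hxy.imp S.iseqv.symm S'.iseqv.symm) _ _
       (ReflTransGen.swap _ _ h),
     .trans⟩
  compat f p q h := by
    refine (reflTransGen_updateRel_of_forall h).lift (A.interp f) ?_
    rintro x _ ⟨i, w, hw, rfl⟩
    exact hw.imp (fun hS => S.compat f _ _ (S.rel_update x i hS))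
      (fun hS' => S'.compat f _ _ (S'.rel_update x i hS'))

theorem rel_sup_iff {S S' : Congruence A} {x y : A.carrier} :
    (S ⊔ S').rel x y ↔ ReflTransGen (fun x y => S.rel x y ∨ S'.rel x y) x y := by
  constructor
  · exact (sup_le (c := joinChain S S') (fun _ _ h => ReflTransGen.single (.inl h))
      (fun _ _ h => ReflTransGen.single (.inr h))) x y
  · intro h
    induction h with
    | refl => exact (S ⊔ S').iseqv.refl x
    | tail _ hstep ih =>
      refine (S ⊔ S').iseqv.trans ih ?_
      rcases hstep with hS | hS'
      · exact (le_sup_left : S ≤ S ⊔ S') _ _ hS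
      · exact (le_sup_right : S' ≤ S ⊔ S') _ _ hS'

end Congruence

section Centralizes

variable {σ : Sig} {A : Alg σ} {S S' T δ : Congruence A}

theorem Centralizes.of_le_left (h : Centralizes S' T δ) (hS : S ≤ S') : Centralizes S T δ :=
  fun m n t a b u v hab huv => h m n t a b u v (fun i => hS _ _ (hab i)) huv

theorem centralizes_left_self (T δ : Congruence A) : Centralizes δ T δ := by
  intro m n t a b u v hab _ hpq
  have hrow (w : Fin n → A.carrier) :
      δ.rel (A.evalTrm (Sum.elim a w) t) (A.evalTrm (Sum.elim b w) t) := by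
    refine δ.rel_evalTrm (fun x => ?_) t
    rcases x with i | j
    · exact hab i
    · exact δ.iseqv.refl _
  exact δ.iseqv.trans (δ.iseqv.trans (δ.iseqv.symm (hrow u)) hpq) (hrow v)

theorem Centralizes.sup (h : Centralizes S T δ) (h' : Centralizes S' T δ) :
    Centralizes (S ⊔ S') T δ := by
  intro m n t a b u v hab huv hpq
  have chain := reflTransGen_updateRel_of_forall fun i => Congruence.rel_sup_iff.1 (hab i)
  clear hab
  induction chain with
  | refl => exact hpq
  | tail _ hstep ih =>
    obtain ⟨i, w, hw, rfl⟩ := hstep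
    rcases hw with hS | hS'
    · exact h m n t _ _ u v (S.rel_update _ i hS) huv ih
    · exact h' m n t _ _ u v (S'.rel_update _ i hS') huv ih

theorem centralizes_sup_left_self_iff : Centralizes (S ⊔ δ) T δ ↔ Centralizes S T δ :=
  ⟨fun h => h.of_le_left le_sup_left, fun h => h.sup (centralizes_left_self T δ)⟩

end Centralizes

/-- In any pentagon `{0', β, δ, θ, α}` of the congruence lattice of an
algebra `A`, `C(β,θ;δ)` holds if and only if `C(α,θ;δ)` holds. -/
theorem pentagon_centrality_transfer {σ : Sig} (A : Alg σ)
    (z β δ θ α : Congruence A) (hpent : IsPentagon z β δ θ α) :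
    Centralizes β θ δ ↔ Centralizes α θ δ := by
  obtain ⟨-, -, -, hjoin, -⟩ := hpent
  rw [← hjoin]
  exact centralizes_sup_left_self_iff.symm
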